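/- arXiv:2305.09984 — 2 statements merged into one kernel-verified Lean document; each statement's English description precedes it below -/
import Mathlib

section
/- Let f be a nonzero noncommutative polynomial over a field F in variables x_1,...,x_n, and let m = x_{i_1} x_{i_2} ... x_{i_d} be a monomial with nonzero coefficient in f, where every monomial of f has degree at most d. Define (d+1)×(d+1) matrices M_1,...,M_n over F by M_j(ℓ, ℓ+1) = 1 if x_j = x_{i_{ℓ+1}} (for 0 ≤ ℓ ≤ d−1) and all other entries 0. Then f(M_1,...,M_n) ≠ 0; specifically, the (0,d) entry of f(M_1,...,M_n) equals the coefficient of m in f. -/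
/-!
Along a word `w`, the product of the transition matrices of the automaton reading `m` has
`(a, b)` entry `1` exactly when `b = a + |w|` and `w` is read off `m` from position `a` on,
and `0` otherwise. At `(0, |m|)` this singles out the one word of length `|m|` that is a prefix
of `m`, namely `m` itself, so that entry of `f(M)` is the coefficient of `m`.
-/

open Matrix

theorem List.cons_prefix_drop_iff {α : Type*} {j : α} {w m : List α} {a : ℕ} :
    j :: w <+: m.drop a ↔ m[a]? = some j ∧ w <+: m.drop (a + 1) := by
  rw [← List.head?_drop, ← List.tail_drop]
  cases m.drop a with
  | nil => simp
  | cons x l => simp [List.cons_prefix_cons, eq_comm]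

section

variable {α R : Type*} [DecidableEq α] [Semiring R]

def wordAutomaton (m : List α) (j : α) : Matrix (Fin (m.length + 1)) (Fin (m.length + 1)) R :=
  of fun a b => if (b : ℕ) = a + 1 ∧ m[(a : ℕ)]? = some j then 1 else 0

theorem prod_map_wordAutomaton_apply (m w : List α) (a b : Fin (m.length + 1)) :
    (w.map (wordAutomaton (R := R) m)).prod a b =
      if (b : ℕ) = a + w.length ∧ w <+: m.drop a then 1 else 0 := by
  induction w generalizing a with
  | nil => simp [one_apply, Fin.ext_iff, eq_comm]
  | cons j w ih =>
    simp only [List.map_cons, List.prod_cons, mul_apply, wordAutomaton, of_apply, ih,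
      List.length_cons, List.cons_prefix_drop_iff]
    by_cases hj : m[(a : ℕ)]? = some j
    · have ha : (a : ℕ) < m.length := (List.getElem?_eq_some_iff.mp hj).1
      rw [Finset.sum_eq_single ⟨a + 1, by omega⟩]
      · simp only [hj, and_true, true_and, if_true, one_mul]
        congr 1
        simp [add_assoc, add_comm 1]
      · intro c _ hc
        rw [if_neg fun h => hc (Fin.ext h.1), zero_mul]
      · simp
    · simp [hj]

theorem sum_smul_prod_map_wordAutomaton_apply_zero_last (f : List α →₀ R) (m : List α) :
    (∑ w ∈ f.support, f w • (w.map (wordAutomaton m)).prod) 0 (Fin.last m.length) = f m := by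
  have hword (w : List α) : (m.length = w.length ∧ w <+: m) ↔ w = m :=
    ⟨fun h => h.2.eq_of_length h.1.symm, by rintro rfl; exact ⟨rfl, List.prefix_refl w⟩⟩
  simp [Matrix.sum_apply, prod_map_wordAutomaton_apply, hword]

end

theorem stmt_0_general {F : Type*} [Field F] (n d : ℕ)
    (f : List (Fin n) →₀ F) (m : List (Fin n))
    (hm : f m ≠ 0) (hlen : m.length = d)
    (M : Fin n → Matrix (Fin (d + 1)) (Fin (d + 1)) F)
    (hM : ∀ j : Fin n, M j = Matrix.of fun (a b : Fin (d + 1)) =>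
      if (b : ℕ) = (a : ℕ) + 1 ∧ m[(a : ℕ)]? = some j then (1 : F) else 0) :
    (∑ w ∈ f.support, f w • ((w.map M).prod)) (0 : Fin (d + 1)) (Fin.last d) = f m ∧
      (∑ w ∈ f.support, f w • ((w.map M).prod)) ≠ 0 := by
  subst hlen
  obtain rfl : M = wordAutomaton m := funext hM
  have hentry := sum_smul_prod_map_wordAutomaton_apply_zero_last f m
  exact ⟨hentry, fun h => hm (by rw [← hentry, h, Matrix.zero_apply])⟩

/-- automaton evaluation certifies a nonzero coefficient of a
noncommutative polynomial, represented as a finitely supported function on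
words over the variables. -/
theorem stmt_0 {F : Type*} [Field F] (n d : ℕ)
    (f : List (Fin n) →₀ F) (m : List (Fin n))
    (hm : f m ≠ 0) (hlen : m.length = d)
    (hdeg : ∀ w ∈ f.support, w.length ≤ d)
    (M : Fin n → Matrix (Fin (d + 1)) (Fin (d + 1)) F)
    (hM : ∀ j : Fin n, M j = Matrix.of fun (a b : Fin (d + 1)) =>
      if (b : ℕ) = (a : ℕ) + 1 ∧ m[(a : ℕ)]? = some j then (1 : F) else 0) :
    (∑ w ∈ f.support, f w • ((w.map M).prod)) (0 : Fin (d + 1)) (Fin.last d) = f m ∧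
      (∑ w ∈ f.support, f w • ((w.map M).prod)) ≠ 0 :=
  stmt_0_general n d f m hm hlen M hM
end

section
/- Let D be a division ring, and let M be an s×s matrix over D of rank at least r+1 in the sense that M cannot be written as a product of an s×r matrix and an r×s matrix over D. If D is realized as a subalgebra of M_d(K) for a field K such that every nonzero element of D is an invertible d×d matrix, then the sd×sd block matrix over K corresponding to M has rank at least (r+1)·d over K. -/
/-!
Over a division ring, inner rank at least `r + 1` means that the row space of `M` has dimension
at least `r + 1`, so some `A` and `N` satisfy `A * M * N = 1` with `1` of size `r + 1`.
Replacing each entry by its image under `φ` and flattening the blocks is multiplicative and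
sends `1` to `1`, so the block matrices satisfy the same identity with `1` of size `(r + 1) d`,
which bounds the rank of the block matrix of `M` from below.
-/

open Matrix

namespace LinearMap

variable {D V W : Type*} [DivisionRing D] [AddCommGroup V] [Module D V]
  [AddCommGroup W] [Module D W]

theorem exists_comp_eq_of_finrank_range_le [FiniteDimensional D V] (f : V →ₗ[D] W) {r : ℕ}
    (hr : Module.finrank D (range f) ≤ r) :
    ∃ (g : V →ₗ[D] Fin r → D) (h : (Fin r → D) →ₗ[D] W), h ∘ₗ g = f := by
  obtain ⟨ι, hι⟩ := finrank_le_iff_exists_linearMap.mp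
    (hr.trans_eq (Module.finrank_fin_fun D).symm)
  obtain ⟨π, hπ⟩ := ι.exists_leftInverse_of_injective (ker_eq_bot.mpr hι)
  refine ⟨ι ∘ₗ f.rangeRestrict, (range f).subtype ∘ₗ π, ext fun v => ?_⟩
  exact congrArg Subtype.val (LinearMap.congr_fun hπ (f.rangeRestrict v))

theorem exists_comp_comp_eq_id_of_le_finrank_range [FiniteDimensional D V] (f : V →ₗ[D] W)
    {r : ℕ} (hr : r ≤ Module.finrank D (range f)) :
    ∃ (a : (Fin r → D) →ₗ[D] V) (b : W →ₗ[D] Fin r → D), b ∘ₗ f ∘ₗ a = id := by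
  obtain ⟨ι, hι⟩ := finrank_le_iff_exists_linearMap.mp
    ((Module.finrank_fin_fun D).trans_le hr)
  obtain ⟨σ, hσ⟩ := f.rangeRestrict.exists_rightInverse_of_surjective f.range_rangeRestrict
  have hfσ (y : range f) : f (σ y) = y := congrArg Subtype.val (LinearMap.congr_fun hσ y)
  have hinj : Function.Injective (f ∘ₗ σ ∘ₗ ι) := fun x y hxy =>
    hι (Subtype.val_injective (by simpa only [comp_apply, hfσ] using hxy))
  obtain ⟨b, hb⟩ := (f ∘ₗ σ ∘ₗ ι).exists_leftInverse_of_injective (ker_eq_bot.mpr hinj)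
  exact ⟨σ ∘ₗ ι, b, hb⟩

end LinearMap

namespace Matrix

theorem exists_mul_mul_eq_one_of_not_exists_mul_eq {D m n : Type*} [DivisionRing D]
    [Fintype m] [DecidableEq m] [Fintype n] [DecidableEq n] {r : ℕ} (M : Matrix m n D)
    (hM : ¬ ∃ (P : Matrix m (Fin r) D) (Q : Matrix (Fin r) n D), M = P * Q) :
    ∃ (A : Matrix (Fin (r + 1)) m D) (N : Matrix n (Fin (r + 1)) D), A * M * N = 1 := by
  set f := M.toLinearMapRight'
  rcases le_or_gt (Module.finrank D (LinearMap.range f)) r with hr | hr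
  · obtain ⟨g, h, hgh⟩ := f.exists_comp_eq_of_finrank_range_le hr
    refine absurd ⟨g.toMatrixRight', h.toMatrixRight', ?_⟩ hM
    rw [← LinearMap.toMatrixRight'_comp, hgh]
    exact (LinearMap.toMatrixRight'.apply_symm_apply M).symm
  · obtain ⟨a, b, hab⟩ := f.exists_comp_comp_eq_id_of_le_finrank_range hr
    refine ⟨a.toMatrixRight', b.toMatrixRight', ?_⟩
    have := congrArg LinearMap.toMatrixRight' hab
    rwa [LinearMap.toMatrixRight'_comp, LinearMap.toMatrixRight'_comp,
      LinearMap.toMatrixRight'_id, LinearEquiv.apply_symm_apply] at this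

theorem comp_mul {I J L K R : Type*} [Fintype J] [Fintype K] [NonUnitalNonAssocSemiring R]
    (M : Matrix I J (Matrix K K R)) (N : Matrix J L (Matrix K K R)) :
    comp I L K K R (M * N) = comp I J K K R M * comp J L K K R N := by
  ext ⟨i, k⟩ ⟨l, k'⟩
  simp [mul_apply, Fintype.sum_prod_type, sum_apply]

theorem card_le_rank_of_mul_mul_eq_one {K k m n : Type*} [Field K] [Fintype k] [DecidableEq k]
    [Fintype m] [Fintype n] {A : Matrix k m K} {M : Matrix m n K} {N : Matrix n k K}
    (h : A * M * N = 1) : Fintype.card k ≤ M.rank :=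
  calc Fintype.card k = (A * M * N).rank := by rw [h, rank_one]
    _ ≤ M.rank := (rank_mul_le_left _ _).trans (rank_mul_le_right _ _)

end Matrix

/-- if an `s×s` matrix over a division ring `D` has inner rank at
least `r+1` (it admits no factorization through `r`), and `D` is realized inside
`M_d(K)` via a ring homomorphism (so every nonzero element of `D` becomes an
invertible `d×d` matrix), then the corresponding `sd×sd` block matrix over `K`
has rank at least `(r+1)·d`. -/
theorem stmt_8 {D K : Type*} [DivisionRing D] [Field K] (s r d : ℕ)
    (M : Matrix (Fin s) (Fin s) D)
    (hM : ¬ ∃ (P : Matrix (Fin s) (Fin r) D) (Q : Matrix (Fin r) (Fin s) D), M = P * Q)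
    (φ : D →+* Matrix (Fin d) (Fin d) K) :
    (r + 1) * d ≤
      (Matrix.of fun (x y : Fin s × Fin d) => φ (M x.1 y.1) x.2 y.2).rank := by
  obtain ⟨A, N, hAMN⟩ := M.exists_mul_mul_eq_one_of_not_exists_mul_eq hM
  have hblock :
      comp _ _ _ _ K (A.map φ) * comp _ _ _ _ K (M.map φ) * comp _ _ _ _ K (N.map φ) = 1 := by
    rw [← comp_mul, ← comp_mul, ← Matrix.map_mul (f := φ), ← Matrix.map_mul (f := φ), hAMN,
      Matrix.map_one _ φ.map_zero φ.map_one, comp_one]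
  calc (r + 1) * d = Fintype.card (Fin (r + 1) × Fin d) := by simp
    -- `comp _ _ _ _ K (M.map φ)` is definitionally the block matrix of the statement.
    _ ≤ _ := card_le_rank_of_mul_mul_eq_one hblock
end
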